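/- arXiv:2310.15295 — 2 statements merged into one kernel-verified Lean document; each statement's English description precedes it below -/
import Mathlib

section
/- Fix smooth ℂ-valued functions c₁, d₁ on S¹ with (c₁, d₁) never both zero, and let ω be the real bilinear form on pairs of ℂ-valued functions defined by ω((a₀,b₀),(ã₀,b̃₀)) = −Im ∫_{S¹} (a₀ conj(b̃₀) + b₀ conj(ã₀)). Suppose (ã₀, b̃₀) are smooth functions such that ω((c₁ζ, d₁ conj(ζ)), (ã₀, b̃₀)) = 0 for every smooth ℂ-valued function ζ on S¹. Then conj(d₁) ã₀ − c₁ conj(b̃₀) = 0 identically. -/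
open intervalIntegral Real MeasureTheory Set Filter

set_option maxHeartbeats 1000000 in
lemma aux_pos (h : ℝ → ℝ) (hcont : Continuous h)
    (hper : Function.Periodic h (2 * Real.pi))
    (hint : ∀ f : ℝ → ℝ, ContDiff ℝ (⊤ : ℕ∞) f → Function.Periodic f (2 * Real.pi) →
      (∫ y in (0:ℝ)..(2 * Real.pi), f y * h y) = 0)
    (y₀ : ℝ) (hpos : 0 < h y₀) : False := by
  have hπ : (0:ℝ) < Real.pi := Real.pi_pos
  set c : ℝ := h y₀ with hcdef
  have ev : ∀ᶠ y in nhds y₀, c / 2 < h y :=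
    (hcont.continuousAt).eventually (eventually_gt_nhds (by linarith))
  obtain ⟨δ, hδ0, hδ⟩ := Metric.eventually_nhds_iff.mp ev
  set δ' : ℝ := min (δ / 2) Real.pi with hδ'def
  have hδ'0 : 0 < δ' := lt_min (by linarith) hπ
  have hδ'π : δ' ≤ Real.pi := min_le_right _ _
  have hδ'δ : δ' < δ := (min_le_left _ _).trans_lt (by linarith)
  set q : ℝ → ℝ := fun y => (1 + Real.cos (y - y₀)) / 2 with hqdef
  set r : ℝ := (1 + Real.cos δ') / 2 with hrdef
  set s : ℝ := (1 + Real.cos (δ' / 2)) / 2 with hsdef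
  have hr0 : 0 ≤ r := by
    have := Real.neg_one_le_cos δ'; rw [hrdef]; linarith
  have hrs : r < s := by
    have : Real.cos δ' < Real.cos (δ' / 2) :=
      Real.strictAntiOn_cos ⟨by linarith, by linarith⟩ ⟨hδ'0.le, hδ'π⟩ (by linarith)
    rw [hrdef, hsdef]; linarith
  have hs0 : 0 < s := hr0.trans_lt hrs
  have hq0 : ∀ y, 0 ≤ q y := by
    intro y; have := Real.neg_one_le_cos (y - y₀)
    simp only [hqdef]; linarith
  have hq_le_r : ∀ y, δ' ≤ |y - y₀| → |y - y₀| ≤ Real.pi → q y ≤ r := by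
    intro y h1 h2
    have : Real.cos (y - y₀) ≤ Real.cos δ' := by
      rw [← Real.cos_abs (y - y₀)]
      exact Real.cos_le_cos_of_nonneg_of_le_pi hδ'0.le h2 h1
    simp only [hqdef, hrdef]; linarith
  have hs_le_q : ∀ y, |y - y₀| ≤ δ' / 2 → s ≤ q y := by
    intro y h1
    have : Real.cos (δ' / 2) ≤ Real.cos (y - y₀) := by
      rw [← Real.cos_abs (y - y₀)]
      exact Real.cos_le_cos_of_nonneg_of_le_pi (abs_nonneg _) (by linarith) h1
    simp only [hqdef, hsdef]; linarith
  clear_value r s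
  set A : ℝ := y₀ - Real.pi with hAdef
  set B : ℝ := y₀ + Real.pi with hBdef
  obtain ⟨C, hC⟩ := (isCompact_Icc (a := A) (b := B)).exists_bound_of_continuousOn
    hcont.continuousOn
  set M : ℝ := max C 1 with hMdef
  have hM : ∀ x ∈ Set.Icc A B, |h x| ≤ M := fun x hx => (hC x hx).trans (le_max_left _ _)
  have hM0 : (0:ℝ) < M := lt_of_lt_of_le one_pos (le_max_right _ _)
  have hc0 : 0 < c := hpos
  have hεpos : 0 < δ' * (c / 2) / (2 * M * Real.pi) := by positivity
  have hlim : Tendsto (fun n : ℕ => (r / s) ^ n) atTop (nhds 0) :=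
    tendsto_pow_atTop_nhds_zero_of_lt_one (by positivity) ((div_lt_one hs0).2 hrs)
  obtain ⟨n, hn⟩ := (hlim.eventually (eventually_lt_nhds hεpos)).exists
  have hkey : 2 * M * Real.pi * r ^ n < δ' * (c / 2) * s ^ n := by
    have hsn : (0:ℝ) < s ^ n := pow_pos hs0 n
    have h1 : r ^ n = (r / s) ^ n * s ^ n := by
      rw [div_pow, div_mul_cancel₀]; exact pow_ne_zero _ hs0.ne'
    have h2 : (r / s) ^ n * (2 * M * Real.pi) < δ' * (c / 2) := by
      have hstep := mul_lt_mul_of_pos_right hn (by positivity : (0:ℝ) < 2 * M * Real.pi)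
      calc (r / s) ^ n * (2 * M * Real.pi)
          < δ' * (c / 2) / (2 * M * Real.pi) * (2 * M * Real.pi) := hstep
        _ = δ' * (c / 2) := div_mul_cancel₀ _ (by positivity : (0:ℝ) < 2 * M * Real.pi).ne'
    calc 2 * M * Real.pi * r ^ n = ((r / s) ^ n * (2 * M * Real.pi)) * s ^ n := by
          rw [h1]; ring
      _ < δ' * (c / 2) * s ^ n := mul_lt_mul_of_pos_right h2 hsn
  -- the test function
  set f : ℝ → ℝ := fun y => (q y) ^ n with hfdef
  have hqc : ContDiff ℝ (⊤ : ℕ∞) q :=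
    (contDiff_const.add (Real.contDiff_cos.comp (contDiff_id.sub contDiff_const))).div_const 2
  have hfc : ContDiff ℝ (⊤ : ℕ∞) f := hqc.pow n
  have hfper : Function.Periodic f (2 * Real.pi) := by
    intro y
    simp only [hfdef, hqdef]
    rw [show y + 2 * Real.pi - y₀ = (y - y₀) + 2 * Real.pi by ring, Real.cos_add_two_pi]
  set g : ℝ → ℝ := fun y => f y * h y with hgdef
  have hgc : Continuous g := (hfc.continuous).mul hcont
  have hgper : Function.Periodic g (2 * Real.pi) := hfper.mul hper
  have hgii : ∀ u v : ℝ, IntervalIntegrable g volume u v := fun u v =>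
    hgc.intervalIntegrable u v
  have hgint : (∫ y in A..B, g y) = 0 := by
    have h1 := hgper.intervalIntegral_add_eq A 0
    rw [show A + 2 * Real.pi = B by rw [hAdef, hBdef]; ring, zero_add] at h1
    rw [h1]
    exact hint f hfc hfper
  set u : ℝ := y₀ - δ' with hudef
  set v : ℝ := y₀ + δ' with hvdef
  have hsplit : (∫ y in A..B, g y)
      = (∫ y in A..u, g y) + (∫ y in u..v, g y) + (∫ y in v..B, g y) := by
    rw [integral_add_adjacent_intervals (hgii A u) (hgii u v),
      integral_add_adjacent_intervals (hgii A v) (hgii v B)]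
  -- tail bounds
  have habs : ∀ y, y ∈ Set.Icc A B → δ' ≤ |y - y₀| → |g y| ≤ M * r ^ n := by
    intro y hy h1
    have h2 : |y - y₀| ≤ Real.pi := by
      rw [abs_le]; constructor
      · have := hy.1; rw [hAdef] at this; linarith
      · have := hy.2; rw [hBdef] at this; linarith
    have h3 : q y ≤ r := hq_le_r y h1 h2
    have h4 : f y ≤ r ^ n := by
      rw [hfdef]; exact pow_le_pow_left₀ (hq0 y) h3 n
    have h5 : 0 ≤ f y := pow_nonneg (hq0 y) n
    calc |g y| = f y * |h y| := by rw [hgdef]; simp [abs_mul, abs_of_nonneg h5]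
      _ ≤ r ^ n * M := mul_le_mul h4 (hM y hy) (abs_nonneg _) (pow_nonneg hr0 n)
      _ = M * r ^ n := by ring
  have hT1 : |∫ y in A..u, g y| ≤ M * r ^ n * Real.pi := by
    have hb : ∀ y ∈ Set.uIoc A u, ‖g y‖ ≤ M * r ^ n := by
      intro y hy
      rw [Set.uIoc_of_le (by rw [hAdef, hudef]; linarith)] at hy
      refine habs y ⟨hy.1.le, ?_⟩ ?_
      · rw [hBdef]; have := hy.2; rw [hudef] at this; linarith
      · have h1 := hy.2; rw [hudef] at h1
        rw [abs_of_nonpos (by linarith)]; linarith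
    have := intervalIntegral.norm_integral_le_of_norm_le_const hb
    rw [Real.norm_eq_abs] at this
    refine this.trans ?_
    have : |u - A| = Real.pi - δ' := by
      rw [hudef, hAdef, abs_of_nonneg (by linarith)]; ring
    rw [this]
    have : (0:ℝ) ≤ M * r ^ n := by positivity
    nlinarith
  have hT2 : |∫ y in v..B, g y| ≤ M * r ^ n * Real.pi := by
    have hb : ∀ y ∈ Set.uIoc v B, ‖g y‖ ≤ M * r ^ n := by
      intro y hy
      rw [Set.uIoc_of_le (by rw [hBdef, hvdef]; linarith)] at hy
      refine habs y ⟨?_, hy.2⟩ ?_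
      · rw [hAdef]; have := hy.1; rw [hvdef] at this; linarith
      · have h1 := hy.1; rw [hvdef] at h1
        rw [abs_of_nonneg (by linarith)]; linarith
    have := intervalIntegral.norm_integral_le_of_norm_le_const hb
    rw [Real.norm_eq_abs] at this
    refine this.trans ?_
    have : |B - v| = Real.pi - δ' := by
      rw [hvdef, hBdef, abs_of_nonneg (by linarith)]; ring
    rw [this]
    have : (0:ℝ) ≤ M * r ^ n := by positivity
    nlinarith
  -- middle lower bound
  have hgpos : ∀ y, |y - y₀| ≤ δ' → 0 ≤ g y := by
    intro y hy
    have : c / 2 < h y := hδ (by rw [Real.dist_eq]; linarith [hy])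
    exact mul_nonneg (pow_nonneg (hq0 y) n) (by linarith)
  have hmid1 : (∫ y in (y₀ - δ'/2)..(y₀ + δ'/2), g y) ≤ ∫ y in u..v, g y := by
    refine intervalIntegral.integral_mono_interval ?_ ?_ ?_ ?_ (hgii u v)
    · simp only [hudef]; linarith
    · linarith
    · simp only [hvdef]; linarith
    · rw [Filter.EventuallyLE, ae_restrict_iff' measurableSet_Ioc]
      filter_upwards with y hy
      apply hgpos
      rw [abs_le]
      constructor
      · have := hy.1; rw [hudef] at this; linarith
      · have := hy.2; rw [hvdef] at this; linarith
  have hmid2 : δ' * (s ^ n * (c / 2)) ≤ ∫ y in (y₀ - δ'/2)..(y₀ + δ'/2), g y := by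
    have hconst : (∫ _ in (y₀ - δ'/2)..(y₀ + δ'/2), s ^ n * (c / 2))
        = δ' * (s ^ n * (c / 2)) := by
      rw [intervalIntegral.integral_const, smul_eq_mul]
      congr 1; ring
    rw [← hconst]
    apply intervalIntegral.integral_mono_on (by linarith)
      (intervalIntegrable_const) (hgii _ _)
    intro y hy
    have h1 : |y - y₀| ≤ δ' / 2 := by
      rw [abs_le]; constructor
      · have := hy.1; linarith
      · have := hy.2; linarith
    have h2 : s ≤ q y := hs_le_q y h1
    have h3 : s ^ n ≤ q y ^ n := pow_le_pow_left₀ hs0.le h2 n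
    have h4 : c / 2 ≤ h y := by
      refine (hδ ?_).le
      rw [Real.dist_eq]
      linarith [h1]
    calc s ^ n * (c / 2) ≤ q y ^ n * h y :=
        mul_le_mul h3 h4 (by linarith) (pow_nonneg (hq0 y) n)
      _ = g y := rfl
  have hfinal : 0 < (∫ y in A..u, g y) + (∫ y in u..v, g y) + (∫ y in v..B, g y) := by
    have e1 : -(M * r ^ n * Real.pi) ≤ ∫ y in A..u, g y := by
      have := abs_le.mp hT1; linarith [this.1]
    have e2 : -(M * r ^ n * Real.pi) ≤ ∫ y in v..B, g y := by
      have := abs_le.mp hT2; linarith [this.1]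
    have e3 : δ' * (s ^ n * (c / 2)) ≤ ∫ y in u..v, g y := hmid2.trans hmid1
    have hcomm : δ' * (c / 2) * s ^ n = δ' * (s ^ n * (c / 2)) := by ring
    linarith
  rw [hsplit] at hgint
  linarith

lemma aux_zero (h : ℝ → ℝ) (hcont : Continuous h)
    (hper : Function.Periodic h (2 * Real.pi))
    (hint : ∀ f : ℝ → ℝ, ContDiff ℝ (⊤ : ℕ∞) f → Function.Periodic f (2 * Real.pi) →
      (∫ y in (0:ℝ)..(2 * Real.pi), f y * h y) = 0)
    (y₀ : ℝ) : h y₀ = 0 := by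
  by_contra hne
  rcases lt_or_gt_of_ne hne with hneg | hpos
  · refine aux_pos (fun y => -h y) (hcont.neg) (fun y => by simp [hper y]) ?_ y₀ (by simpa using hneg)
    intro f hf hfp
    have h0 := hint f hf hfp
    have : (∫ y in (0:ℝ)..(2 * Real.pi), f y * (-h y))
        = -∫ y in (0:ℝ)..(2 * Real.pi), f y * h y := by
      rw [← intervalIntegral.integral_neg]
      congr 1; funext y; ring
    rw [this, h0, neg_zero]
  · exact aux_pos h hcont hper hint y₀ hpos

/-- Self-adjointness of the boundary condition: if smooth periodic `(ã₀, b̃₀)` pair to zero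
under `ω((a₀,b₀),(ã₀,b̃₀)) = −Im ∫_{S¹} (a₀ conj b̃₀ + b₀ conj ã₀)` with every element
`(c₁ζ, d₁ conj ζ)` of the kernel of `T_ψ` (ζ smooth periodic), then
`conj(d₁) ã₀ − c₁ conj(b̃₀) = 0` identically.  Functions on `S¹` are modeled as
`2π`-periodic smooth functions on `ℝ`. -/
theorem statement_2 (c₁ d₁ a b : ℝ → ℂ)
    (hc : ContDiff ℝ (⊤ : ℕ∞) c₁) (hd : ContDiff ℝ (⊤ : ℕ∞) d₁)
    (hcper : Function.Periodic c₁ (2 * Real.pi)) (hdper : Function.Periodic d₁ (2 * Real.pi))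
    (hnd : ∀ y, (c₁ y, d₁ y) ≠ (0, 0))
    (ha : ContDiff ℝ (⊤ : ℕ∞) a) (hb : ContDiff ℝ (⊤ : ℕ∞) b)
    (haper : Function.Periodic a (2 * Real.pi)) (hbper : Function.Periodic b (2 * Real.pi))
    (hω : ∀ ζ : ℝ → ℂ, ContDiff ℝ (⊤ : ℕ∞) ζ → Function.Periodic ζ (2 * Real.pi) →
      -(∫ y in (0:ℝ)..(2 * Real.pi),
          (c₁ y * ζ y) * (starRingEnd ℂ) (b y)
            + (d₁ y * (starRingEnd ℂ) (ζ y)) * (starRingEnd ℂ) (a y)).im = 0) :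
    ∀ y, (starRingEnd ℂ) (d₁ y) * a y - c₁ y * (starRingEnd ℂ) (b y) = 0 := by
  set W : ℝ → ℂ := fun y => c₁ y * (starRingEnd ℂ) (b y) with hWdef
  set V : ℝ → ℂ := fun y => d₁ y * (starRingEnd ℂ) (a y) with hVdef
  have hWc : Continuous W := (hc.continuous).mul (Complex.continuous_conj.comp hb.continuous)
  have hVc : Continuous V := (hd.continuous).mul (Complex.continuous_conj.comp ha.continuous)
  have hWper : Function.Periodic W (2 * Real.pi) := by
    intro y; simp only [hWdef, hcper y, hbper y]
  have hVper : Function.Periodic V (2 * Real.pi) := by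
    intro y; simp only [hVdef, hdper y, haper y]
  have key1 : ∀ y, (W y + V y).im = 0 := by
    apply aux_zero
    · exact Complex.continuous_im.comp (hWc.add hVc)
    · intro y; simp only [hWper y, hVper y]
    · intro f hf hfp
      have hζc : ContDiff ℝ (⊤ : ℕ∞) (fun y => (f y : ℂ)) := Complex.ofRealCLM.contDiff.comp hf
      have hζp : Function.Periodic (fun y => (f y : ℂ)) (2 * Real.pi) := by
        intro y; simp [hfp y]
      have h0 := hω _ hζc hζp
      rw [neg_eq_zero] at h0
      have heq : ∀ y, (c₁ y * (f y : ℂ)) * (starRingEnd ℂ) (b y)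
          + (d₁ y * (starRingEnd ℂ) ((f y : ℂ))) * (starRingEnd ℂ) (a y)
          = (f y : ℂ) * (W y + V y) := by
        intro y; simp only [hWdef, hVdef, Complex.conj_ofReal]; ring
      rw [intervalIntegral.integral_congr (fun y _ => heq y)] at h0
      have hii : IntervalIntegrable (fun y => (f y : ℂ) * (W y + V y)) volume 0 (2 * Real.pi) :=
        ((Complex.continuous_ofReal.comp hf.continuous).mul (hWc.add hVc)).intervalIntegrable _ _
      have hcomm := Complex.imCLM.intervalIntegral_comp_comm hii
      simp only [Complex.imCLM_apply] at hcomm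
      calc (∫ y in (0:ℝ)..(2 * Real.pi), f y * (W y + V y).im)
          = ∫ y in (0:ℝ)..(2 * Real.pi), ((f y : ℂ) * (W y + V y)).im :=
            intervalIntegral.integral_congr (fun y _ => by
              simp [Complex.im_ofReal_mul])
        _ = (∫ y in (0:ℝ)..(2 * Real.pi), (f y : ℂ) * (W y + V y)).im := hcomm
        _ = 0 := h0
  have key2 : ∀ y, (W y - V y).re = 0 := by
    apply aux_zero
    · exact Complex.continuous_re.comp (hWc.sub hVc)
    · intro y; simp only [hWper y, hVper y]
    · intro f hf hfp
      have hζc : ContDiff ℝ (⊤ : ℕ∞) (fun y => (f y : ℂ) * Complex.I) :=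
        (Complex.ofRealCLM.contDiff.comp hf).mul contDiff_const
      have hζp : Function.Periodic (fun y => (f y : ℂ) * Complex.I) (2 * Real.pi) := by
        intro y; simp [hfp y]
      have h0 := hω _ hζc hζp
      rw [neg_eq_zero] at h0
      have heq : ∀ y, (c₁ y * ((f y : ℂ) * Complex.I)) * (starRingEnd ℂ) (b y)
          + (d₁ y * (starRingEnd ℂ) ((f y : ℂ) * Complex.I)) * (starRingEnd ℂ) (a y)
          = (f y : ℂ) * (Complex.I * (W y - V y)) := by
        intro y
        simp only [hWdef, hVdef, map_mul, Complex.conj_ofReal, Complex.conj_I]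
        ring
      rw [intervalIntegral.integral_congr (fun y _ => heq y)] at h0
      have hii : IntervalIntegrable (fun y => (f y : ℂ) * (Complex.I * (W y - V y)))
          volume 0 (2 * Real.pi) :=
        ((Complex.continuous_ofReal.comp hf.continuous).mul
          (continuous_const.mul (hWc.sub hVc))).intervalIntegrable _ _
      have hcomm := Complex.imCLM.intervalIntegral_comp_comm hii
      simp only [Complex.imCLM_apply] at hcomm
      calc (∫ y in (0:ℝ)..(2 * Real.pi), f y * (W y - V y).re)
          = ∫ y in (0:ℝ)..(2 * Real.pi), ((f y : ℂ) * (Complex.I * (W y - V y))).im :=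
            intervalIntegral.integral_congr (fun y _ => by
              simp [Complex.im_ofReal_mul, Complex.mul_im, Complex.I_re, Complex.I_im])
        _ = (∫ y in (0:ℝ)..(2 * Real.pi), (f y : ℂ) * (Complex.I * (W y - V y))).im := hcomm
        _ = 0 := h0
  intro y
  have h1 := key1 y
  have h2 := key2 y
  have hconj : (starRingEnd ℂ) (d₁ y) * a y = (starRingEnd ℂ) (V y) := by
    simp [hVdef, map_mul]
  rw [hconj]
  apply Complex.ext
  · simp only [Complex.sub_re, Complex.conj_re, Complex.zero_re]
    simp only [Complex.sub_re] at h2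
    linarith
  · simp only [Complex.sub_im, Complex.conj_im, Complex.zero_im]
    simp only [Complex.add_im] at h1
    linarith
end

section
/- The function ψ(t,θ) = (e^{-iθ/2}, −i η̂ e^{iθ/2})ᵗ t^{-1/2} e^{-t}, with η̂ ∈ {±1}, satisfies B ψ = 0, where B is the model Bessel operator B = A(θ) ∂_t + B(θ) (1/t) ∂_θ + η̂·diag(1, −1), with A(θ) = [[0, i e^{-iθ}],[i e^{iθ}, 0]] and B(θ) = [[0, e^{-iθ}],[−e^{iθ}, 0]]. -/
/-!
The section separates as `f(t) • v(θ)` with `f(t) = t^{-1/2} e^{-t}` (a constant multiple of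
`K_{1/2}`) and `v(θ) = (e^{-iθ/2}, −iη e^{iθ/2})`. The operator sends `f • v` to
`(f' + f/(2t) + f) • (η e^{-iθ/2}, i e^{iθ/2}) + (η² − 1) f • (0, i e^{iθ/2})`; the first term
vanishes because `f' = −(1/(2t) + 1) f`, the second because `η² = 1`.
-/

/-- The model Bessel operator `B = A(θ) ∂_t + B(θ)(1/t) ∂_θ + η̂ · diag(1,−1)` with
`A(θ) = [[0, i e^{-iθ}],[i e^{iθ},0]]`, `B(θ) = [[0, e^{-iθ}],[−e^{iθ},0]]`. -/
noncomputable def modelBessel (η : ℝ) (u : ℝ → ℝ → Fin 2 → ℂ) (t θ : ℝ) : Fin 2 → ℂ :=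
  (!![0, Complex.I * Complex.exp (-(Complex.I) * (θ : ℂ));
      Complex.I * Complex.exp (Complex.I * (θ : ℂ)), 0]).mulVec
    (deriv (fun t' => u t' θ) t)
  + t⁻¹ • (!![0, Complex.exp (-(Complex.I) * (θ : ℂ));
      -Complex.exp (Complex.I * (θ : ℂ)), 0]).mulVec (deriv (fun θ' => u t θ') θ)
  + (η : ℂ) • (!![1, 0; 0, -1]).mulVec (u t θ)

open Complex

theorem modelBessel_eq_of_hasDerivAt {η : ℝ} {u : ℝ → ℝ → Fin 2 → ℂ} {t θ : ℝ} {ut uθ : Fin 2 → ℂ}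
    (hut : HasDerivAt (fun t' => u t' θ) ut t) (huθ : HasDerivAt (fun θ' => u t θ') uθ θ) :
    modelBessel η u t θ =
      ![I * exp (-I * θ) * ut 1 + t⁻¹ * exp (-I * θ) * uθ 1 + η * u t θ 0,
        I * exp (I * θ) * ut 0 - t⁻¹ * exp (I * θ) * uθ 0 - η * u t θ 1] := by
  rw [modelBessel, hut.deriv, huθ.deriv]
  ext i
  fin_cases i <;> simp [dotProduct, Fin.sum_univ_two] <;> ring

noncomputable def besselRadial (t : ℝ) : ℂ := ((t ^ (-(1/2) : ℝ) : ℝ) : ℂ) * exp (-(t : ℂ))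

theorem hasDerivAt_besselRadial {t : ℝ} (ht : 0 < t) :
    HasDerivAt besselRadial (-((2 * (t : ℂ))⁻¹ + 1) * besselRadial t) t := by
  have hpow := (Real.hasDerivAt_rpow_const (p := -(1/2)) (Or.inl ht.ne')).ofReal_comp
  have hexp := ((hasDerivAt_id (t : ℂ)).neg.cexp).comp_ofReal
  refine (hpow.mul hexp).congr_deriv ?_
  rw [Real.rpow_sub_one ht.ne']
  simp only [besselRadial, Pi.neg_apply, id]
  push_cast
  field_simp
  ring

noncomputable def besselAngular (η θ : ℝ) : Fin 2 → ℂ :=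
  ![exp (-I * θ / 2), -I * η * exp (I * θ / 2)]

theorem hasDerivAt_besselAngular (η θ : ℝ) :
    HasDerivAt (besselAngular η)
      ![-I / 2 * exp (-I * θ / 2), η / 2 * exp (I * θ / 2)] θ := by
  have hexp (c : ℂ) : HasDerivAt (fun θ' : ℝ => exp (c * θ' / 2)) (c / 2 * exp (c * θ / 2)) θ :=
    (((hasDerivAt_id (θ : ℂ)).const_mul c).div_const 2).cexp.comp_ofReal.congr_deriv
      (by simp only [id]; ring)
  rw [hasDerivAt_pi]
  intro i
  fin_cases i
  · exact hexp (-I)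
  · refine ((hexp I).const_mul (-I * η)).congr_deriv ?_
    simp only [Fin.mk_one, Matrix.cons_val_one, Matrix.cons_val_fin_one]
    linear_combination (-(η / 2) * exp (I * θ / 2)) * I_sq

theorem modelBessel_besselRadial_smul_besselAngular {η t : ℝ} (ht : 0 < t) (θ : ℝ) :
    modelBessel η (fun t θ => besselRadial t • besselAngular η θ) t θ =
      ((η : ℂ) ^ 2 - 1) • ![0, I * exp (I * θ / 2) * besselRadial t] := by
  rw [modelBessel_eq_of_hasDerivAt ((hasDerivAt_besselRadial ht).smul_const (besselAngular η θ))
    ((hasDerivAt_besselAngular η θ).const_smul (besselRadial t))]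
  unfold besselAngular
  set z := exp (I * θ / 2)
  have hz : z ≠ 0 := exp_ne_zero _
  have ht' : (t : ℂ) ≠ 0 := by exact_mod_cast ht.ne'
  have hz_inv : exp (-(I * θ) / 2) = z⁻¹ := by rw [neg_div, exp_neg]
  have hz_sq : exp (I * θ) = z ^ 2 := by rw [← exp_nat_mul]; ring_nf
  have hz_sq_inv : exp (-(I * θ)) = (z ^ 2)⁻¹ := by rw [← hz_sq, exp_neg]
  ext i
  fin_cases i
  · simp only [Fin.zero_eta, Pi.smul_apply, Matrix.cons_val_zero, Matrix.cons_val_one,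
      Matrix.cons_val_fin_one, smul_eq_mul, neg_mul, mul_neg, ofReal_inv, hz_inv, hz_sq_inv]
    field_simp
    linear_combination (besselRadial t * η * (1 + 2 * t)) * I_sq
  · simp only [Fin.mk_one, Pi.smul_apply, Matrix.cons_val_zero, Matrix.cons_val_one,
      Matrix.cons_val_fin_one, smul_eq_mul, neg_mul, mul_neg, ofReal_inv, hz_inv, hz_sq]
    field_simp
    ring

/-- The explicit section `ψ(t,θ) = (e^{-iθ/2}, −i η̂ e^{iθ/2})ᵗ t^{-1/2} e^{-t}`
lies in the kernel of the model Bessel operator, for `η̂ ∈ {±1}`. -/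
theorem statement_10 (η : ℝ) (hη : η = 1 ∨ η = -1) :
    ∀ t : ℝ, 0 < t → ∀ θ : ℝ,
      modelBessel η (fun t' θ' => fun i =>
        (if i = 0 then Complex.exp (-(Complex.I) * (θ' : ℂ) / 2)
          else -Complex.I * (η : ℂ) * Complex.exp (Complex.I * (θ' : ℂ) / 2))
          * ((t' ^ (-(1/2) : ℝ) : ℝ) : ℂ) * Complex.exp (-(t' : ℂ))) t θ = 0 := by
  intro t ht θ
  have hη_sq : (η : ℂ) ^ 2 = 1 := by rcases hη with rfl | rfl <;> norm_num
  convert modelBessel_besselRadial_smul_besselAngular (η := η) ht θ using 2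
  · funext t' θ' i
    fin_cases i <;> simp [besselRadial, besselAngular] <;> ring
  · rw [hη_sq, sub_self, zero_smul]
end
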